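/- arXiv:1303.6083 — 3 statements merged into one kernel-verified Lean document; each statement's English description precedes it below -/
import Mathlib

section
/- For any Hermitian operator X and non-negative operators A, B on a finite-dimensional Hilbert space, |tr(X{A,B})|² ≤ 4·tr(AB)·tr(AXBX), where {A,B} = AB + BA is the anticommutator. -/
open Matrix
open scoped ComplexOrder

lemma trace_cs {n : Type*} [Fintype n] [DecidableEq n] (M N : Matrix n n ℂ) :
    ‖(Mᴴ * N).trace‖ ^ 2 ≤ (Mᴴ * M).trace.re * (Nᴴ * N).trace.re := by
  let f : Matrix n n ℂ → EuclideanSpace ℂ (n × n) := fun P => WithLp.toLp 2 (fun p : n × n => P p.1 p.2)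
  have hinner : ∀ P Q : Matrix n n ℂ, (inner ℂ (f P) (f Q) : ℂ) = (Pᴴ * Q).trace := by
    intro P Q
    simp only [PiLp.inner_apply, RCLike.inner_apply, Matrix.trace, Matrix.diag,
      Matrix.mul_apply, Matrix.conjTranspose_apply, f, PiLp.toLp_apply]
    rw [Fintype.sum_prod_type]
    rw [Finset.sum_comm]
    exact Finset.sum_congr rfl fun _ _ => Finset.sum_congr rfl fun _ _ => mul_comm _ _
  have hnorm : ∀ P : Matrix n n ℂ, ‖f P‖ ^ 2 = (Pᴴ * P).trace.re := by
    intro P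
    rw [InnerProductSpace.norm_sq_eq_re_inner (𝕜 := ℂ), hinner, RCLike.re_to_complex]
  calc ‖(Mᴴ * N).trace‖ ^ 2 = ‖(inner ℂ (f M) (f N) : ℂ)‖ ^ 2 := by rw [hinner]
    _ ≤ (‖f M‖ * ‖f N‖) ^ 2 := by
        apply pow_le_pow_left₀ (norm_nonneg _) (norm_inner_le_norm _ _)
    _ = (Mᴴ * M).trace.re * (Nᴴ * N).trace.re := by
        rw [mul_pow, hnorm, hnorm]

open scoped MatrixOrder in
set_option maxHeartbeats 1000000 in
/-- For a Hermitian operator `X` and positive semi-definite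
operators `A`, `B` on a finite-dimensional Hilbert space,
`|tr(X{A,B})|² ≤ 4·tr(AB)·tr(AXBX)`, where `{A,B} = AB + BA`. -/
theorem trace_anticommutator_cauchy_schwarz
    {n : Type*} [Fintype n] [DecidableEq n]
    (A B X : Matrix n n ℂ)
    (hA : A.PosSemidef) (hB : B.PosSemidef) (hX : X.IsHermitian) :
    ‖(X * (A * B + B * A)).trace‖ ^ 2 ≤
      4 * ((A * B).trace.re) * ((A * X * B * X).trace.re) := by
  set a := CFC.sqrt A with ha_def
  set b := CFC.sqrt B with hb_def
  have ha : aᴴ = a := (CFC.sqrt_nonneg A).posSemidef.1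
  have hb : bᴴ = b := (CFC.sqrt_nonneg B).posSemidef.1
  have ha2 : a * a = A := CFC.sqrt_mul_sqrt_self A hA.nonneg
  have hb2 : b * b = B := CFC.sqrt_mul_sqrt_self B hB.nonneg
  set M := a * b with hM_def
  set N := a * X * b with hN_def
  have hMH : Mᴴ = b * a := by rw [hM_def, conjTranspose_mul, ha, hb]
  have hNH : Nᴴ = b * X * a := by
    rw [hN_def, conjTranspose_mul, conjTranspose_mul, ha, hb, hX.eq, Matrix.mul_assoc]
  -- trace identities
  have h1 : (Mᴴ * N).trace = (A * X * B).trace := by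
    have e : Mᴴ * N = b * (A * X * b) := by
      rw [hMH, hN_def, ← ha2]; simp only [Matrix.mul_assoc]
    rw [e, Matrix.trace_mul_comm, ← hb2]; congr 1; simp only [Matrix.mul_assoc]
  have h2 : (Nᴴ * M).trace = (X * (A * B)).trace := by
    have e : Nᴴ * M = b * (X * (A * b)) := by
      rw [hNH, hM_def, ← ha2]; simp only [Matrix.mul_assoc]
    rw [e, Matrix.trace_mul_comm, ← hb2]; congr 1; simp only [Matrix.mul_assoc]
  have hMM : (Mᴴ * M).trace = (A * B).trace := by
    have e : Mᴴ * M = b * (A * b) := by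
      rw [hMH, hM_def, ← ha2]; simp only [Matrix.mul_assoc]
    rw [e, Matrix.trace_mul_comm, ← hb2]; congr 1; simp only [Matrix.mul_assoc]
  have hNN : (Nᴴ * N).trace = (A * X * B * X).trace := by
    have e : Nᴴ * N = (b * X) * (A * X * b) := by
      rw [hNH, hN_def, ← ha2]; simp only [Matrix.mul_assoc]
    rw [e, Matrix.trace_mul_comm, ← hb2]
    congr 1; simp only [Matrix.mul_assoc]
  -- tr(X(AB+BA)) = tr(NᴴM) + tr(MᴴN)
  have hsum : (X * (A * B + B * A)).trace = (Nᴴ * M).trace + (Mᴴ * N).trace := by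
    rw [Matrix.mul_add, Matrix.trace_add, h2, h1]
    congr 1
    rw [← Matrix.mul_assoc, Matrix.trace_mul_cycle]
  have hconj : (Nᴴ * M).trace = starRingEnd ℂ ((Mᴴ * N).trace) := by
    rw [show Nᴴ * M = (Mᴴ * N)ᴴ from
      (by rw [conjTranspose_mul, conjTranspose_conjTranspose] :
        (Mᴴ * N)ᴴ = Nᴴ * M).symm, Matrix.trace_conjTranspose]
    rfl
  set z := (Mᴴ * N).trace with hz
  have hre : (X * (A * B + B * A)).trace = (2 * z.re : ℝ) := by
    rw [hsum, hconj, add_comm, Complex.add_conj]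
  have hnorm2 : ‖(X * (A * B + B * A)).trace‖ ^ 2 ≤ 4 * ‖z‖ ^ 2 := by
    rw [hre]
    rw [Complex.norm_real]
    have : |(2 * z.re : ℝ)| ^ 2 = 4 * z.re ^ 2 := by
      rw [sq_abs]; ring
    rw [Real.norm_eq_abs, this]
    have hle : z.re ^ 2 ≤ ‖z‖ ^ 2 := by
      rw [← sq_abs z.re]
      exact pow_le_pow_left₀ (abs_nonneg _) (Complex.abs_re_le_norm z) 2
    linarith
  have hcs := trace_cs M N
  rw [hMM, hNN] at hcs
  calc ‖(X * (A * B + B * A)).trace‖ ^ 2 ≤ 4 * ‖z‖ ^ 2 := hnorm2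
    _ ≤ 4 * ((A * B).trace.re * (A * X * B * X).trace.re) := by linarith
    _ = 4 * (A * B).trace.re * (A * X * B * X).trace.re := by ring
end

section
/- (Braunstein–Caves bound, inequality direction.) Let ρ(φ) be a smooth family of quantum states with symmetric logarithmic derivative X(φ) satisfying (1/2){X(φ), ρ(φ)} = ρ'(φ), and quantum Fisher information F(φ) = tr(ρ(φ)X(φ)²). For any POVM {Π(α)} (Π(α) ≥ 0, ∫Π(α)dα = 1), the classical Fisher information of the outcome distribution p(α|φ) = tr(Π(α)ρ(φ)) satisfies F_Π(φ) = ∫ (tr(Π(α)ρ'(φ)))²/tr(Π(α)ρ(φ)) dα ≤ F(φ). -/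
open Matrix
open scoped ComplexOrder

namespace BCaux

set_option maxRecDepth 8000

variable {n : Type*} [Fintype n]

noncomputable def emb (A : Matrix n n ℂ) : EuclideanSpace ℂ (n × n) :=
  WithLp.toLp 2 (fun p : n × n => A p.2 p.1)

lemma inner_emb (A B : Matrix n n ℂ) :
    (inner ℂ (emb A) (emb B) : ℂ) = (Aᴴ * B).trace := by
  rw [Matrix.trace]
  simp only [PiLp.inner_apply, RCLike.inner_apply, emb, PiLp.toLp_apply, Matrix.diag_apply,
    Matrix.mul_apply, Matrix.conjTranspose_apply, starRingEnd_apply]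
  rw [Fintype.sum_prod_type]
  exact Finset.sum_congr rfl fun _ _ => Finset.sum_congr rfl fun _ _ => mul_comm _ _

lemma trace_sq_nonneg (A : Matrix n n ℂ) : 0 ≤ (Aᴴ * A).trace.re := by
  have h := inner_self_nonneg (𝕜 := ℂ) (x := emb A)
  rw [inner_emb] at h
  simpa using h

lemma trace_cs (A B : Matrix n n ℂ) :
    ((Aᴴ * B).trace.re) ^ 2 ≤ (Aᴴ * A).trace.re * (Bᴴ * B).trace.re := by
  have h := inner_mul_inner_self_le (𝕜 := ℂ) (emb A) (emb B)
  rw [inner_emb A B, inner_emb B A, inner_emb A A, inner_emb B B] at h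
  have hsym : (Bᴴ * A).trace = star ((Aᴴ * B).trace) := by
    rw [← trace_conjTranspose]
    congr 1
    simp [conjTranspose_mul]
  rw [hsym, norm_star] at h
  simp only [RCLike.re_to_complex] at h
  calc ((Aᴴ * B).trace.re) ^ 2 = |(Aᴴ * B).trace.re| ^ 2 := (sq_abs _).symm
    _ ≤ ‖(Aᴴ * B).trace‖ ^ 2 := by
        apply pow_le_pow_left₀ (abs_nonneg _) _ 2
        exact Complex.abs_re_le_norm _
    _ = ‖(Aᴴ * B).trace‖ * ‖(Aᴴ * B).trace‖ := sq _
    _ ≤ _ := h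

end BCaux

open scoped MatrixOrder

/-- **Braunstein–Caves bound, inequality direction.** Let `ρ φ` be a
differentiable family of quantum states (positive, unit trace) with derivative `ρ' φ`
and symmetric logarithmic derivative `X φ` (Hermitian, `(1/2){X,ρ} = ρ'`), and
quantum Fisher information `F φ = tr(ρ X²)`.  For every POVM `{Pv α}` the classical
Fisher information of the outcome distribution `p(α|φ) = tr(Pv α · ρ φ)` satisfies
`F_Pv(φ) = ∑ α, (tr(Pv α · ρ' φ))²/tr(Pv α · ρ φ) ≤ F φ` (with the convention that
terms with vanishing denominator are `0`, as in Lean's division). -/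
theorem braunstein_caves_bound
    {n : Type*} [Fintype n] [DecidableEq n]
    {ι : Type*} [Fintype ι]
    (ρ ρ' X : ℝ → Matrix n n ℂ)
    (hρ : ∀ φ : ℝ, (ρ φ).PosSemidef ∧ (ρ φ).trace = 1)
    (hderiv : ∀ (φ : ℝ) (i j : n), HasDerivAt (fun t => ρ t i j) (ρ' φ i j) φ)
    (hX : ∀ φ : ℝ, (X φ).IsHermitian)
    (hSLD : ∀ φ : ℝ, (1 / 2 : ℂ) • (X φ * ρ φ + ρ φ * X φ) = ρ' φ)
    (Pv : ι → Matrix n n ℂ)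
    (hPv : ∀ α : ι, (Pv α).PosSemidef)
    (hPsum : ∑ α : ι, Pv α = 1)
    (φ : ℝ) :
    ∑ α : ι, ((Pv α * ρ' φ).trace.re) ^ 2 / (Pv α * ρ φ).trace.re ≤
      (ρ φ * X φ * X φ).trace.re := by
  set ρ0 := ρ φ with hρ0def
  set X0 := X φ with hX0def
  have hρ0 : ρ0.PosSemidef := (hρ φ).1
  set S := CFC.sqrt ρ0 with hSdef
  have hSS : S * S = ρ0 := CFC.sqrt_mul_sqrt_self ρ0 (Matrix.nonneg_iff_posSemidef.mpr hρ0)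
  have hSH : Sᴴ = S := (CFC.sqrt_nonneg ρ0).posSemidef.1
  have hXH : X0ᴴ = X0 := hX φ
  have key : ∀ α : ι, ((Pv α * ρ' φ).trace.re) ^ 2 / (Pv α * ρ0).trace.re ≤
      (X0 * ρ0 * X0 * Pv α).trace.re := by
    intro α
    set P := Pv α with hPdef
    have hP : P.PosSemidef := hPv α
    set Q := CFC.sqrt P with hQdef
    have hQQ : Q * Q = P := CFC.sqrt_mul_sqrt_self P (Matrix.nonneg_iff_posSemidef.mpr hP)
    have hQH : Qᴴ = Q := (CFC.sqrt_nonneg P).posSemidef.1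
    have tQ : ∀ M : Matrix n n ℂ, (Q * M * Q).trace = (M * P).trace := by
      intro M
      rw [trace_mul_cycle, hQQ, trace_mul_comm]
    set A := S * Q with hAdef
    set B := S * X0 * Q with hBdef
    have hAH : Aᴴ = Q * S := by rw [hAdef, conjTranspose_mul, hQH, hSH]
    have hBH : Bᴴ = Q * X0 * S := by
      rw [hBdef, conjTranspose_mul, conjTranspose_mul, hQH, hSH, hXH, Matrix.mul_assoc]
    have eAA : (Aᴴ * A).trace = (P * ρ0).trace := by
      rw [hAH, hAdef, show Q * S * (S * Q) = Q * ρ0 * Q by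
        rw [← hSS]; simp only [Matrix.mul_assoc], tQ, trace_mul_comm]
    have eAB : (Aᴴ * B).trace = (P * (ρ0 * X0)).trace := by
      rw [hAH, hBdef, show Q * S * (S * X0 * Q) = Q * (ρ0 * X0) * Q by
        rw [← hSS]; simp only [Matrix.mul_assoc], tQ, trace_mul_comm]
    have eBB : (Bᴴ * B).trace = (X0 * ρ0 * X0 * P).trace := by
      rw [hBH, hBdef, show Q * X0 * S * (S * X0 * Q) = Q * (X0 * ρ0 * X0) * Q by
        rw [← hSS]; simp only [Matrix.mul_assoc], tQ, trace_mul_comm,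
        ← Matrix.mul_assoc]
    -- numerator
    have h1 : (P * ρ' φ).trace
        = (1 / 2 : ℂ) * ((P * (X0 * ρ0)).trace + (P * (ρ0 * X0)).trace) := by
      rw [← hSLD φ, Matrix.mul_smul, trace_smul, Matrix.mul_add, trace_add]
      simp [smul_eq_mul]
      rfl
    have hstar : star ((P * (ρ0 * X0)).trace) = (P * (X0 * ρ0)).trace := by
      rw [← trace_conjTranspose, conjTranspose_mul, conjTranspose_mul, hXH,
        hρ0.1, hP.1, trace_mul_comm]
    have hr : (P * ρ' φ).trace.re = ((P * (ρ0 * X0)).trace).re := by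
      rw [h1, ← hstar]
      set z := (P * (ρ0 * X0)).trace with hz
      have h2 : star z + z = ((2 * z.re : ℝ) : ℂ) := by
        rw [add_comm]
        exact Complex.add_conj z
      rw [h2]
      have h3 : (1 / 2 : ℂ) * ((2 * z.re : ℝ) : ℂ) = ((z.re : ℝ) : ℂ) := by
        push_cast; ring
      rw [h3, Complex.ofReal_re]
    rw [hr]
    have hd0 : 0 ≤ (P * ρ0).trace.re := by
      have h4 := BCaux.trace_sq_nonneg A
      rwa [eAA] at h4
    have hc0 : 0 ≤ (X0 * ρ0 * X0 * P).trace.re := by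
      have h5 := BCaux.trace_sq_nonneg B
      rwa [eBB] at h5
    rcases eq_or_lt_of_le hd0 with hd | hd
    · rw [← hd, div_zero]; exact hc0
    · rw [div_le_iff₀ hd]
      have hcs := BCaux.trace_cs A B
      rw [eAA, eAB, eBB] at hcs
      calc ((P * (ρ0 * X0)).trace.re) ^ 2
          ≤ (P * ρ0).trace.re * (X0 * ρ0 * X0 * P).trace.re := hcs
        _ = (X0 * ρ0 * X0 * P).trace.re * (P * ρ0).trace.re := mul_comm _ _
  calc ∑ α : ι, ((Pv α * ρ' φ).trace.re) ^ 2 / (Pv α * ρ0).trace.re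
      ≤ ∑ α : ι, (X0 * ρ0 * X0 * Pv α).trace.re :=
        Finset.sum_le_sum (fun α _ => key α)
    _ = (ρ0 * X0 * X0).trace.re := by
        rw [← Complex.re_sum, ← Matrix.trace_sum, ← Finset.mul_sum, hPsum,
          Matrix.mul_one, Matrix.mul_assoc, trace_mul_comm]
end

section
/- (Unbiased clock without noise.) Consider a noiseless clock (K_t = identity) with a ζ-biased estimation strategy, |ζ| < 1, and let y_n be a stationary state of the Markov recursion y_{n+1} = y_n − ŷ_n where ŷ_n is a ζ-biased estimation of y_n (so E[ŷ_n|y_n] = (1−ζ)y_n) with conditional Fisher information F_T(·). Then the stationary variance satisfies E[y_n²] ≥ E[1/F_T(y_n)]·(1−ζ)/(1+ζ), the correlations decay exponentially E[y_{n+h}y_n] = ζ^h E[y_n²], and the clock time variance satisfies the ζ-independent bound lim_{t→∞} E[(t_clock − t)²]/t ≥ T·E[1/F_T(y_n)], where t_clock − t = T∑_{n=0}^{t/T} y_n. -/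
open MeasureTheory ProbabilityTheory Finset Filter

lemma aux_ae_indepFun
    {Ω : Type*} [mΩ : MeasurableSpace Ω] [StandardBorelSpace Ω]
    {μ : Measure Ω} [IsProbabilityMeasure μ]
    {f g w : Ω → ℝ} (hf : Measurable f) (hg : Measurable g) (hw : Measurable w)
    (h : CondIndepFun (MeasurableSpace.comap w inferInstance) hw.comap_le f g μ) :
    ∀ᵐ ω ∂μ, IndepFun f g (condExpKernel μ (MeasurableSpace.comap w inferInstance) ω) := by
  have h' : ∀ᵐ ω ∂(μ.trim hw.comap_le), ∀ q r : ℚ,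
      condExpKernel μ (MeasurableSpace.comap w inferInstance) ω
          (f ⁻¹' Set.Iic (q : ℝ) ∩ g ⁻¹' Set.Iic (r : ℝ)) =
        condExpKernel μ (MeasurableSpace.comap w inferInstance) ω (f ⁻¹' Set.Iic (q : ℝ)) *
          condExpKernel μ (MeasurableSpace.comap w inferInstance) ω (g ⁻¹' Set.Iic (r : ℝ)) := by
    rw [ae_all_iff]
    intro q
    rw [ae_all_iff]
    intro r
    exact h.measure_inter_preimage_eq_mul _ _ measurableSet_Iic measurableSet_Iic
  filter_upwards [ae_of_ae_trim hw.comap_le h'] with ω hω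
  have hgenf : MeasurableSpace.comap f inferInstance =
      MeasurableSpace.generateFrom
        {s : Set Ω | ∃ t ∈ (⋃ q : ℚ, {Set.Iic (q : ℝ)}), f ⁻¹' t = s} := by
    conv_lhs => rw [BorelSpace.measurable_eq (α := ℝ), Real.borel_eq_generateFrom_Iic_rat,
      MeasurableSpace.comap_generateFrom]
    rfl
  have hgeng : MeasurableSpace.comap g inferInstance =
      MeasurableSpace.generateFrom
        {s : Set Ω | ∃ t ∈ (⋃ q : ℚ, {Set.Iic (q : ℝ)}), g ⁻¹' t = s} := by
    conv_lhs => rw [BorelSpace.measurable_eq (α := ℝ), Real.borel_eq_generateFrom_Iic_rat,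
      MeasurableSpace.comap_generateFrom]
    rfl
  have hsets : IndepSets
      {s : Set Ω | ∃ t ∈ (⋃ q : ℚ, {Set.Iic (q : ℝ)}), f ⁻¹' t = s}
      {s : Set Ω | ∃ t ∈ (⋃ q : ℚ, {Set.Iic (q : ℝ)}), g ⁻¹' t = s}
      (condExpKernel μ (MeasurableSpace.comap w inferInstance) ω) := by
    rintro t1 t2 ⟨s1, hs1, rfl⟩ ⟨s2, hs2, rfl⟩
    simp only [Set.mem_iUnion, Set.mem_singleton_iff] at hs1 hs2
    obtain ⟨q, rfl⟩ := hs1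
    obtain ⟨r, rfl⟩ := hs2
    simp only [Kernel.const_apply, ae_dirac_eq, Filter.eventually_pure]
    exact hω q r
  exact IndepSets.indep hf.comap_le hg.comap_le
    (Real.isPiSystem_Iic_rat.comap f) (Real.isPiSystem_Iic_rat.comap g) hgenf hgeng hsets

lemma aux_integral_mul_condexp
    {Ω : Type*} [mΩ : MeasurableSpace Ω] [StandardBorelSpace Ω]
    {μ : Measure Ω} [IsProbabilityMeasure μ]
    {f g w : Ω → ℝ} (hf : Measurable f) (hg : Measurable g) (hw : Measurable w)
    (hf2 : MemLp f 2 μ) (hg2 : MemLp g 2 μ)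
    (h : CondIndepFun (MeasurableSpace.comap w inferInstance) hw.comap_le f g μ) :
    ∫ ω, f ω * g ω ∂μ =
      ∫ ω, (μ[f|MeasurableSpace.comap w inferInstance]) ω *
        (μ[g|MeasurableSpace.comap w inferInstance]) ω ∂μ := by
  have hf_int : Integrable f μ := hf2.integrable one_le_two
  have hg_int : Integrable g μ := hg2.integrable one_le_two
  have hfg_int : Integrable (fun ω => f ω * g ω) μ := by
    have h12 : (1 : ENNReal) / 1 = 1 / 2 + 1 / 2 := by
      rw [div_one, ENNReal.div_add_div_same, one_add_one_eq_two,
        ENNReal.div_self two_ne_zero ENNReal.ofNat_ne_top]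
    have := memLp_one_iff_integrable.mp (hg2.smul hf2 (r := 1))
    exact this
  have h1 : μ[fun ω => f ω * g ω|MeasurableSpace.comap w inferInstance] =ᵐ[μ]
      fun ω => ∫ y, f y * g y ∂(condExpKernel μ (MeasurableSpace.comap w inferInstance) ω) :=
    condExp_ae_eq_integral_condExpKernel hw.comap_le hfg_int
  have h2 := condExp_ae_eq_integral_condExpKernel hw.comap_le hf_int
  have h3 := condExp_ae_eq_integral_condExpKernel hw.comap_le hg_int
  have h4 := aux_ae_indepFun hf hg hw h
  have key : μ[fun ω => f ω * g ω|MeasurableSpace.comap w inferInstance] =ᵐ[μ]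
      fun ω => (μ[f|MeasurableSpace.comap w inferInstance]) ω *
        (μ[g|MeasurableSpace.comap w inferInstance]) ω := by
    filter_upwards [h1, h2, h3, h4] with ω e1 e2 e3 e4
    rw [e1, e2, e3]
    exact (e4 : IndepFun f g _).integral_fun_mul_eq_mul_integral hf.stronglyMeasurable.aestronglyMeasurable
      hg.stronglyMeasurable.aestronglyMeasurable
  calc ∫ ω, f ω * g ω ∂μ
      = ∫ ω, (μ[fun ω => f ω * g ω|MeasurableSpace.comap w inferInstance]) ω ∂μ :=
        (integral_condExp hw.comap_le).symm
    _ = _ := integral_congr_ae key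

noncomputable def corrSum (ζ : ℝ) (N : ℕ) : ℝ :=
  ∑ n ∈ range (N + 1), ∑ m ∈ range (N + 1), ζ ^ (Nat.dist n m)

lemma corrSum_row (ζ : ℝ) (n : ℕ) :
    ∑ m ∈ range n, ζ ^ (Nat.dist n m) = ζ * ∑ j ∈ range n, ζ ^ j := by
  rw [← Finset.sum_range_reflect (fun m => ζ ^ (Nat.dist n m)) n, Finset.mul_sum]
  apply Finset.sum_congr rfl
  intro j hj
  have hj' : j < n := Finset.mem_range.mp hj
  have hd : Nat.dist n (n - 1 - j) = j + 1 := by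
    rw [Nat.dist_eq_sub_of_le_right (by omega : n - 1 - j ≤ n)]
    omega
  rw [hd]
  ring

lemma corrSum_succ (ζ : ℝ) (N : ℕ) :
    corrSum ζ (N + 1) = corrSum ζ N + (1 + 2 * (ζ * ∑ j ∈ range (N + 1), ζ ^ j)) := by
  unfold corrSum
  rw [Finset.sum_range_succ]
  have e1 : ∀ n : ℕ, ∑ m ∈ range (N + 1 + 1), ζ ^ (Nat.dist n m)
      = ∑ m ∈ range (N + 1), ζ ^ (Nat.dist n m) + ζ ^ (Nat.dist n (N + 1)) :=
    fun n => Finset.sum_range_succ _ _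
  rw [Finset.sum_congr rfl fun n _ => e1 n, Finset.sum_add_distrib, e1 (N + 1)]
  have h2 : ∑ n ∈ range (N + 1), ζ ^ (Nat.dist n (N + 1)) = ζ * ∑ j ∈ range (N + 1), ζ ^ j := by
    rw [← corrSum_row ζ (N + 1)]
    exact Finset.sum_congr rfl fun n _ => by rw [Nat.dist_comm]
  rw [h2, corrSum_row ζ (N + 1), Nat.dist_self, pow_zero]
  ring

lemma corrSum_eq_sum (ζ : ℝ) (N : ℕ) :
    corrSum ζ N = ∑ k ∈ range (N + 1), (1 + 2 * (ζ * ∑ j ∈ range k, ζ ^ j)) := by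
  induction N with
  | zero => simp [corrSum]
  | succ n ih =>
    rw [corrSum_succ, ih, Finset.sum_range_succ _ (n + 1)]

lemma corrSum_tendsto {ζ : ℝ} (hζ : |ζ| < 1) :
    Tendsto (fun N : ℕ => corrSum ζ N / N) atTop (nhds ((1 + ζ) / (1 - ζ))) := by
  have hζ1 : ζ < 1 := (abs_lt.mp hζ).2
  have h1 : (0 : ℝ) < 1 - ζ := by linarith
  have hgeo : Tendsto (fun k : ℕ => ∑ j ∈ range k, ζ ^ j) atTop (nhds (1 - ζ)⁻¹) :=
    (hasSum_geometric_of_abs_lt_one hζ).tendsto_sum_nat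
  have hb : Tendsto (fun k : ℕ => 1 + 2 * (ζ * ∑ j ∈ range k, ζ ^ j)) atTop
      (nhds ((1 + ζ) / (1 - ζ))) := by
    have h2 : Tendsto (fun k : ℕ => 1 + 2 * (ζ * ∑ j ∈ range k, ζ ^ j)) atTop
        (nhds (1 + 2 * (ζ * (1 - ζ)⁻¹))) :=
      tendsto_const_nhds.add (tendsto_const_nhds.mul (tendsto_const_nhds.mul hgeo))
    convert h2 using 2
    field_simp
    ring
  have hces1 : Tendsto (fun N : ℕ => corrSum ζ N / ((N : ℝ) + 1)) atTop
      (nhds ((1 + ζ) / (1 - ζ))) := by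
    have := hb.cesaro.comp (tendsto_add_atTop_nat 1)
    refine this.congr fun N => ?_
    simp only [Function.comp]
    rw [← corrSum_eq_sum]
    push_cast
    ring_nf
  have hratio : Tendsto (fun N : ℕ => ((N : ℝ) + 1) / N) atTop (nhds 1) := by
    have h0 : Tendsto (fun N : ℕ => 1 + 1 / (N : ℝ)) atTop (nhds (1 + 0)) :=
      tendsto_const_nhds.add tendsto_one_div_atTop_nhds_zero_nat
    rw [add_zero] at h0
    refine h0.congr' ?_
    filter_upwards [eventually_ge_atTop 1] with N hN
    have hN0 : (N : ℝ) ≠ 0 := by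
      have : (1 : ℝ) ≤ (N : ℝ) := by exact_mod_cast hN
      linarith
    field_simp
  have hmul := hces1.mul hratio
  rw [mul_one] at hmul
  refine hmul.congr' ?_
  filter_upwards [eventually_ge_atTop 1] with N hN
  have hN0 : (N : ℝ) ≠ 0 := by
    have : (1 : ℝ) ≤ (N : ℝ) := by exact_mod_cast hN
    linarith
  have hN1 : (N : ℝ) + 1 ≠ 0 := by positivity
  field_simp

/-- **unbiased clock without noise.** For a noiseless clock with a
`ζ`-biased estimation strategy (`|ζ| < 1`, `ζ ≥ 0`) and stationary zero-mean Markov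
state `y_n` obeying `y_{n+1} = y_n − ŷ_n` with `E[ŷ_n|y_n] = (1−ζ)y_n`, assuming the
Cramér–Rao bound for each synchronization step, the stationary variance satisfies
`E[y_n²] ≥ E[1/F_T(y_n)]·(1−ζ)/(1+ζ)`, the correlations decay exponentially
`E[y_{n+h}y_n] = ζ^h E[y_n²]`, and the clock time variance obeys the ζ-independent
bound `lim_{t→∞} E[(t_clock − t)²]/t ≥ T·E[1/F_T(y_n)]`, where
`t_clock − t = T·∑_{n=0}^{N} y_n` at time `t = NT`. -/
theorem unbiased_clock_without_noise
    {Ω : Type*} [MeasurableSpace Ω] [StandardBorelSpace Ω]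
    (μ : Measure Ω) [IsProbabilityMeasure μ]
    (T ζ σ2 : ℝ) (hT : 0 < T) (hζ : |ζ| < 1) (hζ0 : 0 ≤ ζ)
    (y yhat : ℕ → Ω → ℝ) (FT : ℝ → ℝ)
    (hFTmeas : Measurable FT) (hFTpos : ∀ x : ℝ, 0 < FT x)
    (hy_meas : ∀ n, Measurable (y n)) (hyhat_meas : ∀ n, Measurable (yhat n))
    (hy_L2 : ∀ n, MemLp (y n) 2 μ) (hyhat_L2 : ∀ n, MemLp (yhat n) 2 μ)
    (hinvF_int : ∀ n, Integrable (fun ω => 1 / FT (y n ω)) μ)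
    -- the synchronization recursion y_{n+1} = y_n − ŷ_n
    (hrec : ∀ n, ∀ᵐ ω ∂μ, y (n + 1) ω = y n ω - yhat n ω)
    -- ζ-biased estimation: E[ŷ_n | y_n] = (1−ζ)y_n
    (hbias : ∀ n, μ[yhat n | MeasurableSpace.comap (y n) inferInstance]
      =ᵐ[μ] fun ω => (1 - ζ) * y n ω)
    -- Markov property: past and future are conditionally independent given the present
    (hMarkov : ∀ n h : ℕ, CondIndepFun
      (MeasurableSpace.comap (y (n + h)) inferInstance)
      (hy_meas (n + h)).comap_le (y n) (y (n + h + 1)) μ)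
    -- stationarity with zero mean and variance σ²
    (hmean : ∀ n, ∫ ω, y n ω ∂μ = 0)
    (hvar : ∀ n, ∫ ω, (y n ω) ^ 2 ∂μ = σ2)
    (hstatF : ∀ n, ∫ ω, 1 / FT (y n ω) ∂μ = ∫ ω, 1 / FT (y 0 ω) ∂μ)
    -- the Cramér–Rao bound for a single synchronization step
    (hCR : ∀ n, ∫ ω, (y n ω - yhat n ω) ^ 2 ∂μ ≥
      (1 - ζ) ^ 2 * (∫ ω, 1 / FT (y n ω) ∂μ) + ζ ^ 2 * σ2) :
    σ2 ≥ (∫ ω, 1 / FT (y 0 ω) ∂μ) * (1 - ζ) / (1 + ζ) ∧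
    (∀ n h : ℕ, ∫ ω, y (n + h) ω * y n ω ∂μ = ζ ^ h * σ2) ∧
    (∀ L : ℝ, Tendsto (fun N : ℕ =>
        (∫ ω, (T * ∑ n ∈ range (N + 1), y n ω) ^ 2 ∂μ) / ((N : ℝ) * T))
        atTop (nhds L) →
      L ≥ T * ∫ ω, 1 / FT (y 0 ω) ∂μ) := by
  have hζ1 : ζ < 1 := (abs_lt.mp hζ).2
  have h1m : (0 : ℝ) < 1 - ζ := by linarith
  have h1p : (0 : ℝ) < 1 + ζ := by linarith
  -- integrability of products
  have hint : ∀ n m : ℕ, Integrable (fun ω => y n ω * y m ω) μ := by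
    intro n m
    have h12 : (1 : ENNReal) / 1 = 1 / 2 + 1 / 2 := by
      rw [div_one, ENNReal.div_add_div_same, one_add_one_eq_two,
        ENNReal.div_self two_ne_zero ENNReal.ofNat_ne_top]
    have := memLp_one_iff_integrable.mp ((hy_L2 m).smul (hy_L2 n) (r := 1))
    exact this
  have hy_int : ∀ n, Integrable (y n) μ := fun n => (hy_L2 n).integrable one_le_two
  have hyhat_int : ∀ n, Integrable (yhat n) μ := fun n => (hyhat_L2 n).integrable one_le_two
  -- Part 1
  have part1 : σ2 ≥ (∫ ω, 1 / FT (y 0 ω) ∂μ) * (1 - ζ) / (1 + ζ) := by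
    have h1 : ∫ ω, (y 1 ω) ^ 2 ∂μ = ∫ ω, (y 0 ω - yhat 0 ω) ^ 2 ∂μ :=
      integral_congr_ae (by filter_upwards [hrec 0] with ω hω; rw [hω])
    have h3 : σ2 ≥ (1 - ζ) ^ 2 * (∫ ω, 1 / FT (y 0 ω) ∂μ) + ζ ^ 2 * σ2 := by
      have hv : ∫ ω, (y 0 ω - yhat 0 ω) ^ 2 ∂μ = σ2 := by rw [← h1]; exact hvar 1
      have h4 := hCR 0
      rw [hv] at h4
      exact h4
    rw [ge_iff_le, div_le_iff₀ h1p]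
    nlinarith [h3]
  -- the one-step correlation identity
  have hstep : ∀ n h : ℕ, ∫ ω, y (n + h + 1) ω * y n ω ∂μ = ζ * ∫ ω, y (n + h) ω * y n ω ∂μ := by
    intro n h
    have hprod := aux_integral_mul_condexp (hy_meas n) (hy_meas (n + h + 1)) (hy_meas (n + h))
      (hy_L2 n) (hy_L2 (n + h + 1)) (hMarkov n h)
    have hym : StronglyMeasurable[MeasurableSpace.comap (y (n + h)) inferInstance] (y (n + h)) :=
      (Measurable.of_comap_le le_rfl).stronglyMeasurable
    have e2 : μ[y (n + h)|MeasurableSpace.comap (y (n + h)) inferInstance] = y (n + h) :=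
      condExp_of_stronglyMeasurable (hy_meas (n + h)).comap_le hym (hy_int (n + h))
    have hcond_g : μ[y (n + h + 1)|MeasurableSpace.comap (y (n + h)) inferInstance] =ᵐ[μ]
        fun ω => ζ * y (n + h) ω := by
      have e0 : μ[y (n + h + 1)|MeasurableSpace.comap (y (n + h)) inferInstance] =ᵐ[μ]
          μ[fun ω => y (n + h) ω - yhat (n + h) ω|
            MeasurableSpace.comap (y (n + h)) inferInstance] :=
        condExp_congr_ae (hrec (n + h))
      have e1 : μ[fun ω => y (n + h) ω - yhat (n + h) ω|
            MeasurableSpace.comap (y (n + h)) inferInstance] =ᵐ[μ]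
          μ[y (n + h)|MeasurableSpace.comap (y (n + h)) inferInstance] -
            μ[yhat (n + h)|MeasurableSpace.comap (y (n + h)) inferInstance] :=
        condExp_sub (hy_int (n + h)) (hyhat_int (n + h)) _
      filter_upwards [e0, e1, hbias (n + h)] with ω h0 h1 h3
      rw [h0, h1, Pi.sub_apply, e2, h3]
      ring
    have hpull : μ[fun ω => y (n + h) ω * y n ω|
          MeasurableSpace.comap (y (n + h)) inferInstance] =ᵐ[μ]
        (y (n + h)) * μ[y n|MeasurableSpace.comap (y (n + h)) inferInstance] :=
      condExp_mul_of_stronglyMeasurable_left hym (hint (n + h) n) (hy_int n)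
    calc ∫ ω, y (n + h + 1) ω * y n ω ∂μ
        = ∫ ω, y n ω * y (n + h + 1) ω ∂μ := by simp_rw [mul_comm]
      _ = ∫ ω, (μ[y n|MeasurableSpace.comap (y (n + h)) inferInstance]) ω *
            (μ[y (n + h + 1)|MeasurableSpace.comap (y (n + h)) inferInstance]) ω ∂μ := hprod
      _ = ∫ ω, (μ[y n|MeasurableSpace.comap (y (n + h)) inferInstance]) ω *
            (ζ * y (n + h) ω) ∂μ :=
          integral_congr_ae (by filter_upwards [hcond_g] with ω e; rw [e])
      _ = ζ * ∫ ω, y (n + h) ω *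
            (μ[y n|MeasurableSpace.comap (y (n + h)) inferInstance]) ω ∂μ := by
          rw [← integral_const_mul]
          exact integral_congr_ae (Eventually.of_forall fun ω => by ring)
      _ = ζ * ∫ ω, y (n + h) ω * y n ω ∂μ := by
          congr 1
          calc ∫ ω, y (n + h) ω *
                (μ[y n|MeasurableSpace.comap (y (n + h)) inferInstance]) ω ∂μ
              = ∫ ω, (μ[fun ω => y (n + h) ω * y n ω|
                  MeasurableSpace.comap (y (n + h)) inferInstance]) ω ∂μ :=
                (integral_congr_ae hpull).symm
            _ = ∫ ω, y (n + h) ω * y n ω ∂μ := integral_condExp (hy_meas (n + h)).comap_le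
  -- Part 2
  have part2 : ∀ n h : ℕ, ∫ ω, y (n + h) ω * y n ω ∂μ = ζ ^ h * σ2 := by
    intro n h
    induction h with
    | zero => simpa [pow_two] using hvar n
    | succ k ih =>
      show (∫ ω, y (n + k + 1) ω * y n ω ∂μ) = ζ ^ (k + 1) * σ2
      rw [hstep n k, ih]
      ring
  have hcorr : ∀ n m : ℕ, ∫ ω, y n ω * y m ω ∂μ = ζ ^ (Nat.dist n m) * σ2 := by
    intro n m
    rcases le_total m n with hle | hle
    · obtain ⟨k, rfl⟩ := Nat.exists_eq_add_of_le hle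
      have hd : Nat.dist (m + k) m = k := by
        rw [Nat.dist_eq_sub_of_le_right (Nat.le_add_right m k)]
        omega
      rw [hd]
      exact part2 m k
    · obtain ⟨k, rfl⟩ := Nat.exists_eq_add_of_le hle
      have hd : Nat.dist n (n + k) = k := by
        rw [Nat.dist_eq_sub_of_le (Nat.le_add_right n k)]
        omega
      rw [hd, show (∫ ω, y n ω * y (n + k) ω ∂μ) = ∫ ω, y (n + k) ω * y n ω ∂μ from by
        simp_rw [mul_comm]]
      exact part2 n k
  refine ⟨part1, part2, ?_⟩
  -- Part 3
  have hexp : ∀ N : ℕ, (∫ ω, (T * ∑ n ∈ range (N + 1), y n ω) ^ 2 ∂μ)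
      = T ^ 2 * σ2 * corrSum ζ N := by
    intro N
    have hsq : ∀ ω, (T * ∑ n ∈ range (N + 1), y n ω) ^ 2
        = T ^ 2 * ∑ n ∈ range (N + 1), ∑ m ∈ range (N + 1), y n ω * y m ω := by
      intro ω
      rw [mul_pow]
      congr 1
      rw [sq, Finset.sum_mul_sum]
    calc ∫ ω, (T * ∑ n ∈ range (N + 1), y n ω) ^ 2 ∂μ
        = ∫ ω, T ^ 2 * ∑ n ∈ range (N + 1), ∑ m ∈ range (N + 1), y n ω * y m ω ∂μ :=
          integral_congr_ae (Eventually.of_forall hsq)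
      _ = T ^ 2 * ∫ ω, ∑ n ∈ range (N + 1), ∑ m ∈ range (N + 1), y n ω * y m ω ∂μ :=
          integral_const_mul _ _
      _ = T ^ 2 * ∑ n ∈ range (N + 1), ∫ ω, ∑ m ∈ range (N + 1), y n ω * y m ω ∂μ := by
          rw [integral_finset_sum _ fun n _ => integrable_finset_sum _ fun m _ => hint n m]
      _ = T ^ 2 * ∑ n ∈ range (N + 1), ∑ m ∈ range (N + 1), ∫ ω, y n ω * y m ω ∂μ := by
          congr 1
          exact Finset.sum_congr rfl fun n _ => integral_finset_sum _ fun m _ => hint n m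
      _ = T ^ 2 * ∑ n ∈ range (N + 1), ∑ m ∈ range (N + 1), ζ ^ (Nat.dist n m) * σ2 := by
          congr 1
          exact Finset.sum_congr rfl fun n _ => Finset.sum_congr rfl fun m _ => hcorr n m
      _ = T ^ 2 * σ2 * corrSum ζ N := by
          unfold corrSum
          simp_rw [← Finset.sum_mul]
          ring
  intro L hL
  have hforms : ∀ N : ℕ, (T ^ 2 * σ2 * corrSum ζ N) / ((N : ℝ) * T)
      = (T * σ2) * (corrSum ζ N / (N : ℝ)) := by
    intro N
    rcases eq_or_ne ((N : ℝ)) 0 with h0 | h0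
    · rw [h0]; simp
    · field_simp
  have hF : Tendsto (fun N : ℕ =>
      (∫ ω, (T * ∑ n ∈ range (N + 1), y n ω) ^ 2 ∂μ) / ((N : ℝ) * T))
      atTop (nhds ((T * σ2) * ((1 + ζ) / (1 - ζ)))) := by
    have h := (corrSum_tendsto hζ).const_mul (T * σ2)
    refine h.congr fun N => ?_
    rw [hexp N, hforms N]
  have hLeq : L = (T * σ2) * ((1 + ζ) / (1 - ζ)) := tendsto_nhds_unique hL hF
  have key : (∫ ω, 1 / FT (y 0 ω) ∂μ) * (1 - ζ) ≤ σ2 * (1 + ζ) := by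
    rw [ge_iff_le, div_le_iff₀ h1p] at part1
    exact part1
  rw [hLeq, ge_iff_le, show (T * σ2) * ((1 + ζ) / (1 - ζ)) = (T * σ2 * (1 + ζ)) / (1 - ζ) from by
    ring, le_div_iff₀ h1m]
  nlinarith [mul_le_mul_of_nonneg_left key hT.le]
end
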